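/- Let λ₁, λ₂, μ₁, μ₂, θ_s, θ_d > 0, γ_d = μ₂/(μ₁+μ₂). Define π^R_{m,n} = P^R_{m+n}·S^R_m with P^R_n = ∏_{i=1}^{n} (μ₁+μ₂)/(λ₁+λ₂+i·θ_d) and S^R_m = ∏_{i=1}^{m} ((λ₂+λ₁·[i>1]+(i-1)θ_d)(1-γ_d))/(λ₁+i·θ_d), and q_{1,j} = (λ₂/(μ₂+θ_s))·∏_{k=1}^{j} μ₁/(λ₁+k·θ_d). Then for all j ≥ 2, q_{1,j}·(θ_s+j·θ_d+μ₁+μ₂+λ₁+λ₂) = q_{2,j}·(2θ_s+μ₂) + q_{1,j+1}·((j+1)θ_d+λ₁) + q_{1,j-1}·μ₁ + ∑_{k=0}^{j} π^R_{j-k,k}·λ₂·(1-γ_d)^k, where q_{2,j} = (λ₂/(μ₂+θ_s))·(λ₂/(μ₂+2θ_s))·∏_{k=1}^{j} μ₁/(λ₁+k·θ_d). -/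

import Mathlib

/-!
Everything reduces to the closed form of the boundary sum: writing
`A j = ∏_{k=1}^{j} μ₁/(λ₁+kθ_d)`, one has `∑_{k=0}^{j} π^R_{j-k,k} (1-γ_d)^k = A j`.
The sum is `P^R_j` times the convolution `T j` of `S^R` with the geometric sequence of ratio
`1-γ_d`. One induction gives `S^R_n (λ₂ + [n ≥ 1] λ₁ + nθ_d) = λ₂ T n`, and a second one,
using it and `(1-γ_d)(μ₁+μ₂) = μ₁`, gives `P^R_n T n = A n`. Once the sum is `λ₂ A j`, the
equation is linear in `q_{1,j}` because `q_{1,j±1}` and `q_{2,j}` are explicit multiples of it.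
-/

open Finset

section GeomConv

variable {R : Type*} [CommSemiring R]

def geomConv (S : ℕ → R) (r : R) (n : ℕ) : R :=
  ∑ m ∈ range (n + 1), S m * r ^ (n - m)

theorem geomConv_zero (S : ℕ → R) (r : R) : geomConv S r 0 = S 0 := by
  simp [geomConv]

theorem geomConv_succ (S : ℕ → R) (r : R) (n : ℕ) :
    geomConv S r (n + 1) = r * geomConv S r n + S (n + 1) := by
  rw [geomConv, sum_range_succ, geomConv, mul_sum, Nat.sub_self, pow_zero, mul_one]
  congr 1
  refine sum_congr rfl fun m hm => ?_
  rw [Nat.sub_add_comm (mem_range_succ_iff.mp hm), pow_succ]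
  ring

theorem sum_range_mul_pow_eq_geomConv (S : ℕ → R) (r : R) (n : ℕ) :
    ∑ k ∈ range (n + 1), S (n - k) * r ^ k = geomConv S r n := by
  rw [geomConv, ← sum_range_reflect]
  refine sum_congr rfl fun k hk => ?_
  rw [add_tsub_cancel_right, Nat.sub_sub_self (mem_range_succ_iff.mp hk)]

end GeomConv

theorem prod_Icc_div_linear_succ {K : Type*} [Field K] (x : ℕ → K) (c d : K) (n : ℕ)
    (h : c + (n + 1) * d ≠ 0) :
    (∏ i ∈ Icc 1 (n + 1), x i / (c + i * d)) * (c + (n + 1) * d) =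
      (∏ i ∈ Icc 1 n, x i / (c + i * d)) * x (n + 1) := by
  rw [prod_Icc_succ_top (Nat.le_add_left 1 n), mul_assoc]
  push_cast
  rw [div_mul_cancel₀ _ h]

section BoundarySum

variable {K : Type*} [Field K] {a b d r M : K} {P S A : ℕ → K}

theorem mul_factor_eq_mul_geomConv (hS0 : S 0 = 1)
    (hS : ∀ n : ℕ, S (n + 1) * (a + (n + 1) * d) =
      S n * ((b + (if 1 ≤ n then a else 0) + n * d) * r)) (n : ℕ) :
    S n * (b + (if 1 ≤ n then a else 0) + n * d) = b * geomConv S r n := by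
  induction n with
  | zero => simp [hS0, geomConv_zero]
  | succ n ih =>
    rw [geomConv_succ, if_pos (Nat.le_add_left 1 n)]
    push_cast
    linear_combination hS n + r * ih

theorem mul_geomConv_eq_of_succ (hP0 : P 0 = 1) (hS0 : S 0 = 1) (hA0 : A 0 = 1)
    (hP : ∀ n : ℕ, P (n + 1) * (a + b + (n + 1) * d) = P n * M)
    (hS : ∀ n : ℕ, S (n + 1) * (a + (n + 1) * d) =
      S n * ((b + (if 1 ≤ n then a else 0) + n * d) * r))
    (hA : ∀ n : ℕ, A (n + 1) * (a + (n + 1) * d) = A n * (r * M))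
    (ha : ∀ n : ℕ, a + (n + 1) * d ≠ 0) (hab : ∀ n : ℕ, a + b + (n + 1) * d ≠ 0) (n : ℕ) :
    P n * geomConv S r n = A n := by
  induction n with
  | zero => simp [hP0, hS0, hA0, geomConv_zero]
  | succ n ih =>
    have hfactor := mul_factor_eq_mul_geomConv hS0 hS n
    refine mul_right_cancel₀ (mul_ne_zero (ha n) (hab n)) ?_
    rw [geomConv_succ]
    linear_combination (r * geomConv S r n + S (n + 1)) * (a + (n + 1) * d) * hP n +
      P n * M * hS n + P n * M * r * hfactor + M * r * (a + b + (n + 1) * d) * ih -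
      (a + b + (n + 1) * d) * hA n

variable (a b d r M : K)

theorem prod_mul_geomConv_eq (ha : ∀ n : ℕ, a + (n + 1) * d ≠ 0)
    (hab : ∀ n : ℕ, a + b + (n + 1) * d ≠ 0) (n : ℕ) :
    (∏ i ∈ Icc 1 n, M / (a + b + i * d)) *
        geomConv (fun m => ∏ i ∈ Icc 1 m,
          (b + (if 1 < i then a else 0) + ((i : K) - 1) * d) * r / (a + i * d)) r n =
      ∏ i ∈ Icc 1 n, r * M / (a + i * d) := by
  -- With `n` reverted, unification can read off `P`, `S` and `A` as functions of `n`.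
  revert n
  refine mul_geomConv_eq_of_succ (M := M) ?_ ?_ ?_ (fun n => ?_) (fun n => ?_) (fun n => ?_)
    ha hab
  iterate 3 simp
  · simpa [add_assoc] using
      prod_Icc_div_linear_succ (fun _ => M) (a + b) d n (by simpa [add_assoc] using hab n)
  · have h := prod_Icc_div_linear_succ
      (fun i : ℕ => (b + (if 1 < i then a else 0) + ((i : K) - 1) * d) * r) a d n (ha n)
    simp only [Nat.lt_add_left_iff_pos, Nat.cast_add, Nat.cast_one, add_sub_cancel_right] at h
    exact h
  · exact prod_Icc_div_linear_succ (fun _ => r * M) a d n (ha n)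

end BoundarySum

theorem stmt_16 (l1 l2 m1 m2 θs θd : ℝ) (hl1 : 0 < l1) (hl2 : 0 < l2) (hm1 : 0 < m1)
    (hm2 : 0 < m2) (hθs : 0 < θs) (hθd : 0 < θd)
    (γd : ℝ) (hγd : γd = m2 / (m1 + m2))
    (P S : ℕ → ℝ)
    (hP : ∀ n : ℕ, P n = ∏ i ∈ Finset.Icc 1 n, (m1 + m2) / (l1 + l2 + (i : ℝ) * θd))
    (hS : ∀ m : ℕ, S m = ∏ i ∈ Finset.Icc 1 m,
      ((l2 + (if 1 < i then l1 else 0) + ((i : ℝ) - 1) * θd) * (1 - γd)) /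
        (l1 + (i : ℝ) * θd))
    (πR : ℕ → ℕ → ℝ) (hπR : ∀ m n : ℕ, πR m n = P (m + n) * S m)
    (q1 q2 : ℕ → ℝ)
    (hq1 : ∀ j : ℕ, q1 j =
      (l2 / (m2 + θs)) * ∏ k ∈ Finset.Icc 1 j, m1 / (l1 + (k : ℝ) * θd))
    (hq2 : ∀ j : ℕ, q2 j =
      (l2 / (m2 + θs)) * (l2 / (m2 + 2 * θs)) *
        ∏ k ∈ Finset.Icc 1 j, m1 / (l1 + (k : ℝ) * θd)) :
    ∀ j : ℕ, 2 ≤ j →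
      q1 j * (θs + (j : ℝ) * θd + m1 + m2 + l1 + l2) =
        q2 j * (2 * θs + m2) + q1 (j + 1) * (((j : ℝ) + 1) * θd + l1) +
          q1 (j - 1) * m1 +
          ∑ k ∈ Finset.range (j + 1), πR (j - k) k * l2 * (1 - γd) ^ k := by
  intro j hj
  have hγ : (1 - γd) * (m1 + m2) = m1 := by
    rw [hγd]
    field_simp
    ring
  have hsum : ∑ k ∈ range (j + 1), πR (j - k) k * l2 * (1 - γd) ^ k =
      l2 * ∏ k ∈ Icc 1 j, m1 / (l1 + (k : ℝ) * θd) := by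
    have h := prod_mul_geomConv_eq l1 l2 θd (1 - γd) (m1 + m2) (fun n => by positivity)
      (fun n => by positivity) j
    rw [hγ, ← hP, ← funext hS, ← sum_range_mul_pow_eq_geomConv, mul_sum] at h
    rw [← h, mul_sum]
    refine sum_congr rfl fun k hk => ?_
    rw [hπR, Nat.sub_add_cancel (mem_range_succ_iff.mp hk)]
    ring
  have hq1_succ : ∀ n : ℕ, q1 (n + 1) * (l1 + (n + 1) * θd) = q1 n * m1 := fun n => by
    rw [hq1, hq1, mul_assoc, prod_Icc_div_linear_succ _ _ _ _ (by positivity), mul_assoc]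
  have hq2_eq : q2 j * (2 * θs + m2) = q1 j * l2 := by
    rw [hq1, hq2]
    generalize ∏ k ∈ Icc 1 j, m1 / (l1 + (k : ℝ) * θd) = A
    field_simp
    ring
  have hprod : l2 * ∏ k ∈ Icc 1 j, m1 / (l1 + (k : ℝ) * θd) = q1 j * (m2 + θs) := by
    rw [hq1]
    generalize ∏ k ∈ Icc 1 j, m1 / (l1 + (k : ℝ) * θd) = A
    field_simp
  obtain ⟨i, rfl⟩ : ∃ i, j = i + 1 := ⟨j - 1, by omega⟩
  have hq1_next := hq1_succ (i + 1)
  rw [hsum, Nat.add_sub_cancel]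
  push_cast at hq1_next ⊢
  linear_combination hq1_succ i - hq1_next - hq2_eq - hprod
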